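/- Let S, T, U, V be finite sets and let D_W denote the algebra of complex-valued functions on a finite set W. Given a no-signalling correlation p over (S,T,U,V), the linear map Γ_p : D_U ⊗ D_V → D_S ⊗ D_T determined by Γ_p(δ_u ⊗ δ_v) = ∑_{s∈S} ∑_{t∈T} p(u,v|s,t) δ_s ⊗ δ_t is unital, positive, and satisfies Γ_p(D_U ⊗ 1) ⊆ D_S ⊗ 1 and Γ_p(1 ⊗ D_V) ⊆ 1 ⊗ D_T. Conversely, every unital positive linear map Γ : D_U ⊗ D_V → D_S ⊗ D_T satisfying these two containments arises as Γ_p for a unique no-signalling correlation p. -/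
import Mathlib


open scoped ComplexOrder

/-- `p` is a no-signalling correlation over `(S,T,U,V)`. -/
def IsNoSignallingCorr {S T U V : Type*} [Fintype U] [Fintype V]
    (p : S → T → U → V → ℝ) : Prop :=
  (∀ s t u v, 0 ≤ p s t u v) ∧
  (∀ s t, ∑ u, ∑ v, p s t u v = 1) ∧
  (∀ s u t t', ∑ v, p s t u v = ∑ v, p s t' u v) ∧
  (∀ t v s s', ∑ u, p s t u v = ∑ u, p s' t u v)

/-- `Γ` is the map `Γ_p` determined by `Γ_p(δ_u ⊗ δ_v) = ∑_{s,t} p(u,v|s,t) δ_s ⊗ δ_t`,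
with `D_U ⊗ D_V` identified with `ℂ^{U×V}` and `D_S ⊗ D_T` with `ℂ^{S×T}`. -/
def IsGammaOf {S T U V : Type*} [Fintype U] [Fintype V]
    (p : S → T → U → V → ℝ)
    (Γ : ((U × V) → ℂ) →ₗ[ℂ] ((S × T) → ℂ)) : Prop :=
  ∀ f z, Γ f z = ∑ u, ∑ v, (p z.1 z.2 u v : ℂ) * f (u, v)

/-- `Γ` is unital, positive, and maps `D_U ⊗ 1` into `D_S ⊗ 1` and
`1 ⊗ D_V` into `1 ⊗ D_T`. -/
def IsNSMap {S T U V : Type*} [Fintype U] [Fintype V]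
    (Γ : ((U × V) → ℂ) →ₗ[ℂ] ((S × T) → ℂ)) : Prop :=
  Γ 1 = 1 ∧
  (∀ f, (∀ w, 0 ≤ f w) → ∀ z, 0 ≤ Γ f z) ∧
  (∀ g : U → ℂ, ∃ h : S → ℂ, Γ (fun w => g w.1) = fun z => h z.1) ∧
  (∀ g : V → ℂ, ∃ h : T → ℂ, Γ (fun w => g w.2) = fun z => h z.2)

/-- The correspondence between no-signalling correlations over `(S,T,U,V)` and
unital positive maps `Γ : D_U ⊗ D_V → D_S ⊗ D_T` with
`Γ(D_U ⊗ 1) ⊆ D_S ⊗ 1` and `Γ(1 ⊗ D_V) ⊆ 1 ⊗ D_T`. -/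
theorem noSignalling_corr_iff_ns_map
    (S T U V : Type*) [Fintype S] [Fintype T] [Fintype U] [Fintype V] :
    (∀ p : S → T → U → V → ℝ, IsNoSignallingCorr p →
      ∃ Γ : ((U × V) → ℂ) →ₗ[ℂ] ((S × T) → ℂ), IsGammaOf p Γ ∧ IsNSMap Γ) ∧
    (∀ Γ : ((U × V) → ℂ) →ₗ[ℂ] ((S × T) → ℂ), IsNSMap Γ →
      ∃! p : S → T → U → V → ℝ, IsNoSignallingCorr p ∧ IsGammaOf p Γ) := by
  classical
  constructor
  · -- forward direction
    rintro p ⟨hpos, hsum, hA, hB⟩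
    refine ⟨{ toFun := fun f z => ∑ u, ∑ v, (p z.1 z.2 u v : ℂ) * f (u, v)
              map_add' := ?_
              map_smul' := ?_ }, ?_, ?_, ?_, ?_, ?_⟩
    · intro f g; funext z; simp [mul_add, Finset.sum_add_distrib]
    · intro c f; funext z
      simp [Finset.mul_sum, mul_left_comm]
    · intro f z; rfl
    · funext z
      have : ((∑ u, ∑ v, p z.1 z.2 u v : ℝ) : ℂ) = 1 := by rw [hsum]; norm_num
      simpa using this
    · intro f hf z
      refine Finset.sum_nonneg fun u _ => Finset.sum_nonneg fun v _ => ?_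
      have h1 : (0:ℂ) ≤ (p z.1 z.2 u v : ℂ) := by
        rw [Complex.nonneg_iff]; simp [hpos]
      exact mul_nonneg h1 (hf (u, v))
    · intro g
      rcases isEmpty_or_nonempty T with hT | hT
      · exact ⟨0, funext fun z => (hT.false z.2).elim⟩
      · obtain ⟨t₀⟩ := hT
        refine ⟨fun s => ∑ u, (∑ v, (p s t₀ u v : ℂ)) * g u, funext fun z => ?_⟩
        show ∑ u, ∑ v, (p z.1 z.2 u v : ℂ) * g u = _
        rw [show ∑ u, ∑ v, (p z.1 z.2 u v : ℂ) * g u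
            = ∑ u, (∑ v, (p z.1 z.2 u v : ℂ)) * g u by
          simp [Finset.sum_mul]]
        congr 1; funext u
        congr 1
        have := hA z.1 u z.2 t₀
        exact_mod_cast congrArg (Complex.ofReal) this
    · intro g
      rcases isEmpty_or_nonempty S with hS | hS
      · exact ⟨0, funext fun z => (hS.false z.1).elim⟩
      · obtain ⟨s₀⟩ := hS
        refine ⟨fun t => ∑ v, (∑ u, (p s₀ t u v : ℂ)) * g v, funext fun z => ?_⟩
        show ∑ u, ∑ v, (p z.1 z.2 u v : ℂ) * g v = _
        rw [Finset.sum_comm]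
        rw [show ∑ v, ∑ u, (p z.1 z.2 u v : ℂ) * g v
            = ∑ v, (∑ u, (p z.1 z.2 u v : ℂ)) * g v by
          simp [Finset.sum_mul]]
        congr 1; funext v
        congr 1
        have := hB z.2 v z.1 s₀
        exact_mod_cast congrArg (Complex.ofReal) this
  · -- converse direction
    rintro Γ ⟨hu, hpos, hA, hB⟩
    set δ : U → V → ((U × V) → ℂ) := fun u v w => if w = (u, v) then 1 else 0 with hδ
    have hδnn : ∀ u v w, (0:ℂ) ≤ δ u v w := by
      intro u v w; by_cases h : w = (u, v) <;> simp [δ, h]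
    set p : S → T → U → V → ℝ := fun s t u v => (Γ (δ u v) (s, t)).re with hp
    have hΓδnn : ∀ u v z, 0 ≤ Γ (δ u v) z := fun u v z => hpos _ (hδnn u v) z
    have hreal : ∀ u v (z : S × T), Γ (δ u v) z = ((p z.1 z.2 u v : ℝ) : ℂ) := by
      intro u v z
      have h := Complex.nonneg_iff.mp (hΓδnn u v z)
      exact Complex.ext (by simp [p]) (by simp [h.2])
    have hexpand : ∀ f : (U × V) → ℂ, f = ∑ u, ∑ v, f (u, v) • δ u v := by
      intro f; funext w
      simp [δ, Prod.ext_iff, ite_and, mul_ite]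
    have hGamma : IsGammaOf p Γ := by
      intro f z
      conv_lhs => rw [hexpand f]
      rw [map_sum]
      simp only [Finset.sum_apply]
      refine Finset.sum_congr rfl fun u _ => ?_
      rw [map_sum]
      simp only [Finset.sum_apply]
      refine Finset.sum_congr rfl fun v _ => ?_
      rw [map_smul]
      simp [hreal u v z, mul_comm]
    have hδone : (∑ u, ∑ v, δ u v) = (1 : (U × V) → ℂ) := by
      funext w
      simp [δ, Prod.ext_iff, ite_and]
    have hNS : IsNoSignallingCorr p := by
      refine ⟨fun s t u v => ?_, fun s t => ?_, fun s u t t' => ?_, fun t v s s' => ?_⟩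
      · exact (Complex.nonneg_iff.mp (hΓδnn u v (s, t))).1
      · have : ((∑ u, ∑ v, p s t u v : ℝ) : ℂ) = 1 := by
          push_cast
          calc ∑ u, ∑ v, ((p s t u v : ℝ) : ℂ)
              = ∑ u, ∑ v, Γ (δ u v) (s, t) := by
                refine Finset.sum_congr rfl fun u _ => Finset.sum_congr rfl fun v _ =>
                  (hreal u v (s, t)).symm
            _ = Γ (∑ u, ∑ v, δ u v) (s, t) := by
                rw [map_sum]; simp only [Finset.sum_apply]
                refine Finset.sum_congr rfl fun u _ => ?_
                rw [map_sum]; simp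
            _ = 1 := by rw [hδone, hu]; rfl
        exact_mod_cast this
      · obtain ⟨h, hh⟩ := hA (fun u' => if u' = u then 1 else 0)
        have key : ∀ t₁ : T, ((∑ v, p s t₁ u v : ℝ) : ℂ) = h s := by
          intro t₁
          have e1 : (fun w : U × V => if w.1 = u then (1:ℂ) else 0) = ∑ v, δ u v := by
            funext w
            by_cases h1 : w.1 = u
            · simp [δ, Prod.ext_iff, h1]
            · simp [δ, Prod.ext_iff, h1]
          have := congrFun hh (s, t₁)
          simp only at this
          rw [e1] at this
          rw [map_sum] at this
          simp only [Finset.sum_apply] at this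
          rw [← this]
          push_cast
          exact Finset.sum_congr rfl fun v _ => (hreal u v (s, t₁)).symm
        have := (key t).trans (key t').symm
        exact_mod_cast this
      · obtain ⟨h, hh⟩ := hB (fun v' => if v' = v then 1 else 0)
        have key : ∀ s₁ : S, ((∑ u, p s₁ t u v : ℝ) : ℂ) = h t := by
          intro s₁
          have e1 : (fun w : U × V => if w.2 = v then (1:ℂ) else 0) = ∑ u, δ u v := by
            funext w
            by_cases h1 : w.2 = v
            · simp [δ, Prod.ext_iff, h1]
            · simp [δ, Prod.ext_iff, h1]
          have := congrFun hh (s₁, t)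
          simp only at this
          rw [e1] at this
          rw [map_sum] at this
          simp only [Finset.sum_apply] at this
          rw [← this]
          push_cast
          exact Finset.sum_congr rfl fun u _ => (hreal u v (s₁, t)).symm
        have := (key s).trans (key s').symm
        exact_mod_cast this
    refine ⟨p, ⟨hNS, hGamma⟩, ?_⟩
    rintro q ⟨-, hq⟩
    funext s t u v
    have h1 := hq (δ u v) (s, t)
    have h2 : Γ (δ u v) (s, t) = ((q s t u v : ℝ) : ℂ) := by
      rw [h1]
      simp [δ, Prod.ext_iff, ite_and, mul_ite]
    have := (hreal u v (s, t)).symm.trans h2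
    exact_mod_cast this.symm
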